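/- Let k ≥ 1 and let G be a finite graph with maximum degree at most k+1 satisfying: (A) no edge of G joins two vertices both of degree less than k+1; (B) no edge of G joins two vertices both of degree k+1; (C) every vertex adjacent to a vertex of degree k+1 has degree at most 2. Let G* be the graph whose vertex set is S = {v : deg_G(v) = k+1}, with distinct u, v ∈ S adjacent in G* if and only if there exists a vertex z of G with deg_G(z) = 2 such that uz and vz are both edges of G. Then E(G) can be partitioned into two (possibly empty) locally k-irregular parts if and only if G* is bipartite (equivalently, 2-colorable). -/

import Mathlib

open SimpleGraph

variable {V : Type*}

/-- The degree of a vertex `v` in an edge part `E`: the number of edges of `E` incident to `v`. -/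
noncomputable def partDeg (E : Set (Sym2 V)) (v : V) : ℕ :=
  {e ∈ E | v ∈ e}.ncard

/-- A part is a matching if no two of its edges share a vertex. -/
def IsMatchingPart (E : Set (Sym2 V)) : Prop :=
  ∀ e ∈ E, ∀ f ∈ E, e ≠ f → ∀ v : V, v ∈ e → v ∉ f

/-- A part is locally irregular if the endpoints of each of its edges have distinct degrees. -/
def IsLocallyIrregularPart (E : Set (Sym2 V)) : Prop :=
  ∀ u v : V, s(u, v) ∈ E → partDeg E u ≠ partDeg E v

/-- A part is locally regular if the endpoints of each of its edges have equal degrees. -/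
def IsLocallyRegularPart (E : Set (Sym2 V)) : Prop :=
  ∀ u v : V, s(u, v) ∈ E → partDeg E u = partDeg E v

/-- A part is regular if all vertices incident to one of its edges have the same degree `r ≥ 1`. -/
def IsRegularPart (E : Set (Sym2 V)) : Prop :=
  ∃ r : ℕ, 1 ≤ r ∧ ∀ v : V, (∃ e ∈ E, v ∈ e) → partDeg E v = r

/-- A part is `r`-regular if every vertex incident to one of its edges has degree `r` in it. -/
def IsRegularPartOfDeg (r : ℕ) (E : Set (Sym2 V)) : Prop :=
  ∀ v : V, (∃ e ∈ E, v ∈ e) → partDeg E v = r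

/-- A part is locally `k`-irregular if endpoint degrees of each edge differ by at least `k`. -/
def IsLocallyKIrregularPart (k : ℕ) (E : Set (Sym2 V)) : Prop :=
  ∀ u v : V, s(u, v) ∈ E → (k : ℤ) ≤ |(partDeg E u : ℤ) - (partDeg E v : ℤ)|

/-- The maximum degree of a finite graph. -/
noncomputable def maxDeg [Fintype V] (G : SimpleGraph V) : ℕ :=
  Finset.univ.sup fun v => partDeg G.edgeSet v

/-!
Every edge of `G` has exactly one endpoint of degree `k + 1`, its centre, and its other endpoint
has degree at most `k`. In a locally `k`-irregular part, one edge at a centre `c` already forces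
`c` to have degree `k + 1` in the part, so each part is a union of whole stars of centres. Two
centres with a common neighbour `z` of degree 2 lie in different parts, since otherwise `z` has
degree 2 in the part and `|k + 1 - 2| < k`; hence the parts 2-colour `G*`. Conversely, putting
each star into the part of the colour of its centre makes every centre have degree `k + 1` and
every other vertex degree 1 in its part: a leaf of degree 2 joins two centres adjacent in `G*`.
-/

section PartDeg

variable {E F : Set (Sym2 V)}

lemma partDeg_mono [Finite V] (h : E ⊆ F) (v : V) : partDeg E v ≤ partDeg F v :=
  Set.ncard_le_ncard (fun _ he => ⟨h he.1, he.2⟩) (Set.toFinite _)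

lemma one_le_partDeg [Finite V] {e : Sym2 V} {v : V} (he : e ∈ E) (hv : v ∈ e) :
    1 ≤ partDeg E v :=
  (Set.ncard_pos (Set.toFinite _)).2 ⟨e, he, hv⟩

lemma two_le_partDeg [Finite V] {u u' v : V} (hu : u ≠ u') (h : s(u, v) ∈ E)
    (h' : s(u', v) ∈ E) : 2 ≤ partDeg E v :=
  (Set.one_lt_ncard (Set.toFinite _)).2
    ⟨_, ⟨h, Sym2.mem_mk_right u v⟩, _, ⟨h', Sym2.mem_mk_right u' v⟩, mt Sym2.congr_left.1 hu⟩

lemma partDeg_eq_of_forall_mem {v : V} (h : E ⊆ F) (hv : ∀ f ∈ F, v ∈ f → f ∈ E) :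
    partDeg E v = partDeg F v := by
  unfold partDeg
  congr 1
  ext f
  exact ⟨fun hf => ⟨h hf.1, hf.2⟩, fun hf => ⟨hv f hf.1 hf.2, hf.2⟩⟩

lemma mem_of_partDeg_le [Finite V] {v : V} {f : Sym2 V} (h : E ⊆ F)
    (hv : partDeg F v ≤ partDeg E v) (hf : f ∈ F) (hvf : v ∈ f) : f ∈ E := by
  have heq : {e ∈ E | v ∈ e} = {e ∈ F | v ∈ e} :=
    Set.eq_of_subset_of_ncard_le (fun _ he => ⟨h he.1, he.2⟩) hv (Set.toFinite _)
  exact ((Set.ext_iff.mp heq f).2 ⟨hf, hvf⟩).1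

lemma partDeg_eq_one {u v : V} (huv : s(u, v) ∈ E) (h : ∀ w, s(w, v) ∈ E → w = u) :
    partDeg E v = 1 := by
  refine Set.ncard_eq_one.2 ⟨s(u, v), Set.ext fun f => ⟨?_, ?_⟩⟩
  · rintro ⟨hf, hvf⟩
    obtain ⟨w, rfl⟩ := Sym2.mem_iff_exists.mp hvf
    rw [Sym2.eq_swap] at hf ⊢
    rw [h w hf]
    rfl
  · rintro rfl
    exact ⟨huv, Sym2.mem_mk_right u v⟩

lemma partDeg_eq_of_isLocallyKIrregularPart [Finite V] {k : ℕ} {c w : V} (hE : E ⊆ F)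
    (hirr : IsLocallyKIrregularPart k E) (hc : partDeg F c ≤ k + 1) (hw : partDeg F w ≤ k)
    (hcw : s(c, w) ∈ E) : partDeg E c = k + 1 := by
  have := partDeg_mono hE c
  have := partDeg_mono hE w
  have := one_le_partDeg hcw (Sym2.mem_mk_left c w)
  have := one_le_partDeg hcw (Sym2.mem_mk_right c w)
  have := le_abs.mp (hirr c w hcw)
  omega

end PartDeg

section CentreGraph

/-- The graph `G*` of the statement. -/
def centreGraph (k : ℕ) (G : SimpleGraph V) : SimpleGraph V :=
  SimpleGraph.fromRel fun u v =>
    partDeg G.edgeSet u = k + 1 ∧ partDeg G.edgeSet v = k + 1 ∧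
    ∃ z : V, partDeg G.edgeSet z = 2 ∧ G.Adj u z ∧ G.Adj v z

variable {k : ℕ} {G : SimpleGraph V} {E : Set (Sym2 V)}

lemma mem_of_isLocallyKIrregularPart [Finite V]
    (hN : ∀ u v, G.Adj u v → partDeg G.edgeSet u = k + 1 → partDeg G.edgeSet v ≤ k)
    (hE : E ⊆ G.edgeSet) (hirr : IsLocallyKIrregularPart k E) {c w x : V}
    (hc : partDeg G.edgeSet c = k + 1) (hcw : s(c, w) ∈ E) (hcx : G.Adj c x) : s(c, x) ∈ E := by
  refine mem_of_partDeg_le hE ?_ hcx (Sym2.mem_mk_left c x)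
  rw [partDeg_eq_of_isLocallyKIrregularPart hE hirr hc.le (hN c w (hE hcw) hc) hcw, hc]

lemma notMem_of_isLocallyKIrregularPart [Finite V] (hk : 1 ≤ k)
    (hN : ∀ u v, G.Adj u v → partDeg G.edgeSet u = k + 1 → partDeg G.edgeSet v ≤ k)
    (hE : E ⊆ G.edgeSet) (hirr : IsLocallyKIrregularPart k E) {u v z : V}
    (hu : partDeg G.edgeSet u = k + 1) (huv : u ≠ v) (hz : partDeg G.edgeSet z = 2)
    (huz : s(u, z) ∈ E) : s(v, z) ∉ E := by
  intro hvz
  have := partDeg_eq_of_isLocallyKIrregularPart hE hirr hu.le (hN u z (hE huz) hu) huz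
  have := two_le_partDeg huv huz hvz
  have := hz ▸ partDeg_mono hE z
  have := le_abs.mp (hirr u z huz)
  omega

theorem centreGraph_colorable_of_union_eq [Finite V] (hk : 1 ≤ k)
    (hN : ∀ u v, G.Adj u v → partDeg G.edgeSet u = k + 1 → partDeg G.edgeSet v ≤ k)
    {E₁ E₂ : Set (Sym2 V)} (hunion : E₁ ∪ E₂ = G.edgeSet)
    (h₁ : IsLocallyKIrregularPart k E₁) (h₂ : IsLocallyKIrregularPart k E₂) :
    (centreGraph k G).Colorable 2 := by
  have hE₁ : E₁ ⊆ G.edgeSet := hunion ▸ Set.subset_union_left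
  have hE₂ : E₂ ⊆ G.edgeSet := hunion ▸ Set.subset_union_right
  let colour : V → Prop := fun v => ∃ e ∈ E₁, v ∈ e
  have hcolour : ∀ {c w}, partDeg G.edgeSet c = k + 1 → G.Adj c w →
      (s(c, w) ∈ E₁ ↔ colour c) := by
    refine fun hc hcw => ⟨fun h => ⟨_, h, Sym2.mem_mk_left _ _⟩, ?_⟩
    rintro ⟨e, he, hce⟩
    obtain ⟨x, rfl⟩ := Sym2.mem_iff_exists.mp hce
    exact mem_of_isLocallyKIrregularPart hN hE₁ h₁ hc he hcw
  have key : ∀ u v, u ≠ v →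
      (partDeg G.edgeSet u = k + 1 ∧ partDeg G.edgeSet v = k + 1 ∧
        ∃ z : V, partDeg G.edgeSet z = 2 ∧ G.Adj u z ∧ G.Adj v z) → ¬(colour u ↔ colour v) := by
    rintro u v huv ⟨hu, hv, z, hz, huz, hvz⟩
    rw [← hcolour hu huz, ← hcolour hv hvz]
    intro hiff
    by_cases huz₁ : s(u, z) ∈ E₁
    · exact notMem_of_isLocallyKIrregularPart hk hN hE₁ h₁ hu huv hz huz₁ (hiff.1 huz₁)
    · have mem₂ : ∀ {e}, e ∈ G.edgeSet → e ∉ E₁ → e ∈ E₂ :=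
        fun he he₁ => (hunion ▸ he : _ ∈ E₁ ∪ E₂).resolve_left he₁
      exact notMem_of_isLocallyKIrregularPart hk hN hE₂ h₂ hu huv hz (mem₂ huz huz₁)
        (mem₂ hvz (mt hiff.2 huz₁))
  classical
  refine (Coloring.mk (fun v => decide (colour v)) fun {u v} huv => ?_).colorable
  rw [Ne, decide_eq_decide]
  obtain ⟨hne, h | h⟩ := huv
  · exact key u v hne h
  · exact fun hiff => key v u hne.symm h hiff.symm

variable {α : Type*}

def colourPart (C : (centreGraph k G).Coloring α) (a : α) : Set (Sym2 V) :=
  {e ∈ G.edgeSet | ∃ u ∈ e, partDeg G.edgeSet u = k + 1 ∧ C u = a}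

lemma partDeg_colourPart_eq_one [Finite V]
    (hN : ∀ u v, G.Adj u v → partDeg G.edgeSet u = k + 1 → partDeg G.edgeSet v ≤ k)
    (hC : ∀ u v, G.Adj u v → partDeg G.edgeSet u = k + 1 → partDeg G.edgeSet v ≤ 2)
    (C : (centreGraph k G).Coloring α) {a : α} {u v : V} (huv : s(u, v) ∈ colourPart C a)
    (hu : partDeg G.edgeSet u = k + 1) (hua : C u = a) : partDeg (colourPart C a) v = 1 := by
  refine partDeg_eq_one huv fun w ⟨hwv, x, hx, hxdeg, hxa⟩ => ?_
  have hvdeg := hN u v huv.1 hu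
  obtain rfl : x = w := (Sym2.mem_iff.mp hx).resolve_right fun h => by subst h; omega
  by_contra hxu
  have hv : partDeg G.edgeSet v = 2 :=
    le_antisymm (hC u v huv.1 hu) (two_le_partDeg (Ne.symm hxu) huv.1 hwv)
  exact C.valid ⟨Ne.symm hxu, Or.inl ⟨hu, hxdeg, v, hv, huv.1, hwv⟩⟩ (hua.trans hxa.symm)

lemma colourPart_isLocallyKIrregularPart [Finite V]
    (hN : ∀ u v, G.Adj u v → partDeg G.edgeSet u = k + 1 → partDeg G.edgeSet v ≤ k)
    (hC : ∀ u v, G.Adj u v → partDeg G.edgeSet u = k + 1 → partDeg G.edgeSet v ≤ 2)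
    (C : (centreGraph k G).Coloring α) (a : α) : IsLocallyKIrregularPart k (colourPart C a) := by
  have hcentre : ∀ {u v}, s(u, v) ∈ colourPart C a → partDeg G.edgeSet u = k + 1 → C u = a →
      partDeg (colourPart C a) u = k + 1 := fun _ hu hua =>
    hu ▸ partDeg_eq_of_forall_mem (fun _ hf => hf.1) fun f hf huf => ⟨hf, _, huf, hu, hua⟩
  intro u v huv
  obtain ⟨-, x, hx, hxdeg, hxa⟩ := id huv
  rcases Sym2.mem_iff.mp hx with rfl | rfl
  · rw [hcentre huv hxdeg hxa, partDeg_colourPart_eq_one hN hC C huv hxdeg hxa]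
    simp
  · rw [Sym2.eq_swap] at huv
    rw [hcentre huv hxdeg hxa, partDeg_colourPart_eq_one hN hC C huv hxdeg hxa]
    simp

lemma colourPart_disjoint
    (hN : ∀ u v, G.Adj u v → partDeg G.edgeSet u = k + 1 → partDeg G.edgeSet v ≤ k)
    (C : (centreGraph k G).Coloring α) {a b : α} (hab : a ≠ b) :
    Disjoint (colourPart C a) (colourPart C b) := by
  refine Set.disjoint_left.2 fun e ⟨he, x, hx, hxdeg, hxa⟩ ⟨_, y, hy, hydeg, hyb⟩ => hab ?_
  induction e using Sym2.ind with
  | _ u v =>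
    have hne : ∀ {p q}, G.Adj p q → partDeg G.edgeSet p = k + 1 → partDeg G.edgeSet q ≠ k + 1 :=
      fun hpq hp hq => by have := hN _ _ hpq hp; omega
    obtain rfl : x = y := by
      rcases Sym2.mem_iff.mp hx with rfl | rfl <;> rcases Sym2.mem_iff.mp hy with rfl | rfl
      · rfl
      · exact absurd hydeg (hne he hxdeg)
      · exact absurd hydeg (hne (G.mem_edgeSet.mp he).symm hxdeg)
      · rfl
    exact hxa.symm.trans hyb

lemma colourPart_union
    (hcentre : ∀ u v, G.Adj u v → partDeg G.edgeSet u = k + 1 ∨ partDeg G.edgeSet v = k + 1)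
    (C : (centreGraph k G).Coloring (Fin 2)) : colourPart C 0 ∪ colourPart C 1 = G.edgeSet := by
  refine Set.Subset.antisymm (Set.union_subset (fun _ he => he.1) fun _ he => he.1) ?_
  intro e he
  induction e using Sym2.ind with
  | _ u v =>
    obtain ⟨x, hx, hxdeg⟩ : ∃ x ∈ s(u, v), partDeg G.edgeSet x = k + 1 :=
      (hcentre u v he).elim (⟨u, Sym2.mem_mk_left u v, ·⟩) (⟨v, Sym2.mem_mk_right u v, ·⟩)
    rcases Fin.exists_fin_two.mp ⟨C x, rfl⟩ with h | h
    · exact Or.inl ⟨he, x, hx, hxdeg, h⟩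
    · exact Or.inr ⟨he, x, hx, hxdeg, h⟩

end CentreGraph

/-- for a graph of maximum degree at most k+1 satisfying conditions (A), (B), (C),
the edge set decomposes into two locally k-irregular parts iff the auxiliary graph G* (on the
vertices of degree k+1, joined when they have a common neighbour of degree 2) is 2-colorable. -/
theorem stmt_16 {V : Type*} [Fintype V] (k : ℕ) (hk : 1 ≤ k) (G : SimpleGraph V)
    (hΔ : ∀ v : V, partDeg G.edgeSet v ≤ k + 1)
    (hA : ∀ u v : V, G.Adj u v →
      ¬(partDeg G.edgeSet u < k + 1 ∧ partDeg G.edgeSet v < k + 1))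
    (hB : ∀ u v : V, G.Adj u v →
      ¬(partDeg G.edgeSet u = k + 1 ∧ partDeg G.edgeSet v = k + 1))
    (hC : ∀ u v : V, G.Adj u v → partDeg G.edgeSet u = k + 1 →
      partDeg G.edgeSet v ≤ 2) :
    (∃ E₁ E₂ : Set (Sym2 V),
        E₁ ∪ E₂ = G.edgeSet ∧ Disjoint E₁ E₂ ∧
        IsLocallyKIrregularPart k E₁ ∧ IsLocallyKIrregularPart k E₂) ↔
      (SimpleGraph.fromRel fun u v =>
        partDeg G.edgeSet u = k + 1 ∧ partDeg G.edgeSet v = k + 1 ∧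
        ∃ z : V, partDeg G.edgeSet z = 2 ∧ G.Adj u z ∧ G.Adj v z).Colorable 2 := by
  have hN : ∀ u v, G.Adj u v → partDeg G.edgeSet u = k + 1 → partDeg G.edgeSet v ≤ k :=
    fun u v huv hu => by have := hΔ v; have := hB u v huv; omega
  have hcentre : ∀ u v, G.Adj u v → partDeg G.edgeSet u = k + 1 ∨ partDeg G.edgeSet v = k + 1 :=
    fun u v huv => by have := hΔ u; have := hΔ v; have := hA u v huv; omega
  constructor
  · rintro ⟨E₁, E₂, hunion, -, h₁, h₂⟩
    exact centreGraph_colorable_of_union_eq hk hN hunion h₁ h₂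
  · rintro ⟨C⟩
    exact ⟨colourPart C 0, colourPart C 1, colourPart_union hcentre C,
      colourPart_disjoint hN C (by decide), colourPart_isLocallyKIrregularPart hN hC C 0,
      colourPart_isLocallyKIrregularPart hN hC C 1⟩
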